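/- arXiv:1507.07676 — 2 statements merged into one kernel-verified Lean document; each statement's English description precedes it below -/
import Mathlib

section
/- Let A1 and A2 be finite-dimensional algebras over a field K and Φ : A1 → A2 a surjective algebra homomorphism whose kernel is spanned as a K-vector space by an idempotent. Then semisimplicity of A2 implies semisimplicity of A1. -/
/-!
A surjection onto a semisimple ring kills the Jacobson radical, so `J(A₁) ⊆ ker Φ = K e`.
An idempotent in the Jacobson radical is zero (`1 - e` has a left inverse, yet `(1 - e) e = 0`), so
`J(A₁)` cannot contain a nonzero multiple of `e`, hence `J(A₁) = 0`, and an Artinian ring with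
zero Jacobson radical is semisimple.
-/

theorem IsIdempotentElem.eq_zero_of_mem_jacobson {R : Type*} [Ring R] {e : R}
    (he : IsIdempotentElem e) (hJ : e ∈ Ring.jacobson R) : e = 0 := by
  rw [← Ideal.jacobson_bot] at hJ
  obtain ⟨s, hs⟩ := Ideal.exists_mul_add_sub_mem_of_mem_jacobson (-e) (neg_mem hJ)
  rw [Ideal.mem_bot, sub_eq_zero, neg_add_eq_sub] at hs
  calc e = s * (1 - e) * e := by rw [hs, one_mul]
    _ = 0 := by rw [mul_assoc, sub_mul, one_mul, he.eq, sub_self, mul_zero]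

theorem Ring.jacobson_le_ker_of_surjective {R S : Type*} [Ring R] [Ring S] [IsSemisimpleRing S]
    (f : R →+* S) (hf : Function.Surjective f) : Ring.jacobson R ≤ RingHom.ker f := by
  have : RingHomSurjective f := ⟨hf⟩
  rw [RingHom.ker_eq_comap_bot, ← IsSemisimpleRing.jacobson_eq_bot S]
  exact Ring.le_comap_jacobson f

theorem Ring.jacobson_eq_bot_of_forall_mem_eq_smul {K A : Type*} [Field K] [Ring A]
    [Algebra K A] {e : A} (he : IsIdempotentElem e)
    (h : ∀ x ∈ Ring.jacobson A, ∃ c : K, x = c • e) : Ring.jacobson A = ⊥ := by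
  refine (Submodule.eq_bot_iff _).mpr fun x hx ↦ ?_
  obtain ⟨c, rfl⟩ := h x hx
  rcases eq_or_ne c 0 with rfl | hc
  · exact zero_smul K e
  have he_mem : e ∈ Ring.jacobson A := by
    simpa [smul_smul, hc] using (Ring.jacobson A).smul_of_tower_mem c⁻¹ hx
  rw [he.eq_zero_of_mem_jacobson he_mem, smul_zero]

theorem stmt_1_general (K A₁ A₂ : Type*) [Field K]
    [Ring A₁] [Algebra K A₁] [FiniteDimensional K A₁]
    [Ring A₂] [Algebra K A₂]
    (Φ : A₁ →ₐ[K] A₂) (hsurj : Function.Surjective Φ)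
    (e : A₁) (he : e * e = e)
    (hker : ∀ x : A₁, Φ x = 0 ↔ ∃ c : K, x = c • e) :
    IsSemisimpleRing A₂ → IsSemisimpleRing A₁ := by
  intro _
  have : IsArtinianRing A₁ := .of_finite K A₁
  have hJ : ∀ x ∈ Ring.jacobson A₁, ∃ c : K, x = c • e := fun x hx ↦
    (hker x).mp (Ring.jacobson_le_ker_of_surjective Φ.toRingHom hsurj hx)
  exact IsArtinianRing.isSemisimpleRing_iff_jacobson.mpr
    (Ring.jacobson_eq_bot_of_forall_mem_eq_smul he hJ)

/-- Let `A₁` and `A₂` be finite-dimensional algebras over a field `K` and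
`Φ : A₁ → A₂` a surjective algebra homomorphism whose kernel is spanned as a `K`-vector space by
an idempotent. Then semisimplicity of `A₂` implies semisimplicity of `A₁`. -/
theorem stmt_1 (K A₁ A₂ : Type*) [Field K]
    [Ring A₁] [Algebra K A₁] [FiniteDimensional K A₁]
    [Ring A₂] [Algebra K A₂] [FiniteDimensional K A₂]
    (Φ : A₁ →ₐ[K] A₂) (hsurj : Function.Surjective Φ)
    (e : A₁) (hne : e ≠ 0) (he : e * e = e)
    (hker : ∀ x : A₁, Φ x = 0 ↔ ∃ c : K, x = c • e) :
    IsSemisimpleRing A₂ → IsSemisimpleRing A₁ :=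
  stmt_1_general K A₁ A₂ Φ hsurj e he hker
end

section
/- Let K be a field, let d ∈ ℤ_{>0}, and let λ = (λ_1 ≥ ... ≥ λ_m ≥ 0) be a partition of d regarded as a dominant integral gl_m-weight. Let ρ = (m−1, m−2, ..., 1, 0). Suppose char(K) = p > d. Then for every pair 1 ≤ i < j ≤ m and every k ∈ ℤ_{>0} with kp < j − i + λ_i − λ_j, the vector μ = λ + ρ − kp(ε_i − ε_j) has two equal coordinates (i.e., there exist indices a ≠ b with μ_a = μ_b). -/
/-! Put `t = kp + λ_j - λ_i`; since `kp ≥ p > d ≥ λ_i` this is positive, and the hypothesis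
`kp < j - i + λ_i - λ_j` says exactly that `a = i + t` lies strictly before `j`. A partition of `d`
has `λ_a = 0` as soon as `λ_i + (a - i) > d`, which holds here because `λ_i + t ≥ kp > d`; hence
also `λ_j = 0`, and then `μ_a = λ_i + m - 1 - i - kp = μ_i`. -/

namespace Antitone

variable {m : ℕ} {lam : Fin m → ℕ}

theorem add_mul_le_sum (hmono : Antitone lam) (i a : Fin m) :
    lam i + ((a : ℕ) - i) * lam a ≤ ∑ c, lam c := by
  have hIoc : ((a : ℕ) - i) * lam a ≤ ∑ c ∈ Finset.Ioc i a, lam c := by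
    simpa [Fin.card_Ioc] using
      Finset.card_nsmul_le_sum (Finset.Ioc i a) lam (lam a)
        fun c hc => hmono (Finset.mem_Ioc.mp hc).2
  calc lam i + ((a : ℕ) - i) * lam a ≤ ∑ c ∈ insert i (Finset.Ioc i a), lam c := by
        rw [Finset.sum_insert (by simp)]; omega
    _ ≤ ∑ c, lam c := Finset.sum_le_sum_of_subset (Finset.subset_univ _)

theorem eq_zero_of_sum_lt (hmono : Antitone lam) {i a : Fin m}
    (hlt : ∑ c, lam c < lam i + ((a : ℕ) - i)) : lam a = 0 := by
  by_contra hne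
  have := hmono.add_mul_le_sum i a
  have : (a : ℕ) - i ≤ ((a : ℕ) - i) * lam a := Nat.le_mul_of_pos_right _ (Nat.pos_of_ne_zero hne)
  omega

end Antitone

theorem stmt_6_general (p d m : ℕ) (hdp : d < p)
    (lam : Fin m → ℕ) (hmono : Antitone lam) (hsum : ∑ a, lam a = d)
    (i j : Fin m) (k : ℕ) (hk : 0 < k)
    (hlt : (k * p : ℤ) < ((j : ℕ) : ℤ) - ((i : ℕ) : ℤ) + (lam i : ℤ) - (lam j : ℤ)) :
    ∃ a b : Fin m, a ≠ b ∧
      ((lam a : ℤ) + ((m : ℤ) - 1 - ((a : ℕ) : ℤ))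
          - (if a = i then (k * p : ℤ) else 0) + (if a = j then (k * p : ℤ) else 0))
        = ((lam b : ℤ) + ((m : ℤ) - 1 - ((b : ℕ) : ℤ))
          - (if b = i then (k * p : ℤ) else 0) + (if b = j then (k * p : ℤ) else 0)) := by
  have hli : lam i ≤ d :=
    hsum ▸ Finset.single_le_sum (fun c _ => Nat.zero_le (lam c)) (Finset.mem_univ i)
  have hkp : d < k * p := hdp.trans_le (Nat.le_mul_of_pos_left p hk)
  have hj := j.isLt
  set t := k * p + lam j - lam i
  have hat : (i : ℕ) + t < j := by omega
  let a : Fin m := ⟨i + t, by omega⟩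
  have ha : (a : ℕ) = i + t := rfl
  have hia : a ≠ i := fun h => by have := congrArg Fin.val h; omega
  have haj : a ≠ j := fun h => by have := congrArg Fin.val h; omega
  have hlam_a : lam a = 0 := hmono.eq_zero_of_sum_lt (i := i) (by omega)
  have hlam_j : lam j = 0 := Nat.le_zero.mp (hlam_a ▸ hmono (Fin.le_def.mpr (by omega)))
  refine ⟨a, i, hia, ?_⟩
  have hij : i ≠ j := Fin.ne_of_lt (Fin.lt_def.mpr (by omega))
  simp only [hia, haj, hij, if_true, if_false]
  rw [ha, hlam_a]
  omega

/-- Let `K` be a field, `d ∈ ℤ_{>0}`, and `λ = (λ_1 ≥ ... ≥ λ_m ≥ 0)` a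
partition of `d` regarded as a dominant integral `gl_m`-weight. Let `ρ = (m−1, m−2, ..., 1, 0)`.
Suppose `char(K) = p > d`. Then for every pair `1 ≤ i < j ≤ m` and every `k ∈ ℤ_{>0}` with
`kp < j − i + λ_i − λ_j`, the vector `μ = λ + ρ − kp(ε_i − ε_j)` has two equal coordinates.
(Indices here are `0`-based: the coordinate of `ρ` at `a : Fin m` is `m − 1 − a`.) -/
theorem stmt_6 (K : Type*) [Field K] (p d m : ℕ) [CharP K p] (hp : p.Prime) (hdp : d < p)
    (hd : 0 < d) (lam : Fin m → ℕ) (hmono : Antitone lam) (hsum : ∑ a, lam a = d)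
    (i j : Fin m) (hij : i < j) (k : ℕ) (hk : 0 < k)
    (hlt : (k * p : ℤ) < ((j : ℕ) : ℤ) - ((i : ℕ) : ℤ) + (lam i : ℤ) - (lam j : ℤ)) :
    ∃ a b : Fin m, a ≠ b ∧
      ((lam a : ℤ) + ((m : ℤ) - 1 - ((a : ℕ) : ℤ))
          - (if a = i then (k * p : ℤ) else 0) + (if a = j then (k * p : ℤ) else 0))
        = ((lam b : ℤ) + ((m : ℤ) - 1 - ((b : ℕ) : ℤ))
          - (if b = i then (k * p : ℤ) else 0) + (if b = j then (k * p : ℤ) else 0)) :=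
  stmt_6_general p d m hdp lam hmono hsum i j k hk hlt
end
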